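/- Let μ be a finite Borel measure on [0,∞) and c > 0 satisfy c · μ((0,∞)) > 1. Then there exists a unique γ ≥ 0 such that 1 = γ c ∫₀^∞ τ/(1+τγ) dμ(τ); moreover this γ is strictly positive. -/

import Mathlib

/-!
Multiplying by `γ` turns the equation into `1 = c · S(γ)` with
`S(γ) = ∫_{[0,∞)} τγ / (1 + τγ) dμ(τ)`. The integrand is increasing in `γ`, strictly so
where `τ > 0`, and tends to the indicator of `(0,∞)` as `γ → ∞`; hence `S` is continuous and
strictly increasing on `[0,∞)`, vanishes at `0`, and tends to `μ((0,∞))` by dominated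
convergence. As `c · μ((0,∞)) > 1`, the intermediate value theorem gives a solution, which is
positive because `S(0) = 0`, and unique by strict monotonicity.
-/

open MeasureTheory Set Filter Topology

lemma div_one_add_self_eq_one_sub_inv {x : ℝ} (hx : 1 + x ≠ 0) :
    x / (1 + x) = 1 - (1 + x)⁻¹ := by
  field_simp
  ring

lemma strictMonoOn_div_one_add_self : StrictMonoOn (fun x : ℝ => x / (1 + x)) (Ioi (-1)) := by
  intro x hx y hy hxy
  have hx' : 0 < 1 + x := by linarith [mem_Ioi.1 hx]
  have hy' : 0 < 1 + y := by linarith [mem_Ioi.1 hy]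
  simp only [div_one_add_self_eq_one_sub_inv hx'.ne', div_one_add_self_eq_one_sub_inv hy'.ne']
  gcongr

lemma continuousOn_div_one_add_self : ContinuousOn (fun x : ℝ => x / (1 + x)) (Ioi (-1)) :=
  continuousOn_id.div (continuousOn_const.add continuousOn_id) fun x hx => by
    linarith [mem_Ioi.1 hx]

lemma mul_mem_Ioi_neg_one {τ γ : ℝ} (hτ : 0 ≤ τ) (hγ : 0 ≤ γ) : τ * γ ∈ Ioi (-1) :=
  lt_of_lt_of_le (by norm_num) (mul_nonneg hτ hγ)

lemma div_one_add_self_mem_Ico {x : ℝ} (hx : 0 ≤ x) : x / (1 + x) ∈ Ico 0 1 :=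
  ⟨by positivity, (div_lt_one (by positivity)).2 (by linarith)⟩

lemma tendsto_div_one_add_self_atTop : Tendsto (fun x : ℝ => x / (1 + x)) atTop (𝓝 1) := by
  have h : Tendsto (fun x : ℝ => 1 - (1 + x)⁻¹) atTop (𝓝 (1 - 0)) :=
    tendsto_const_nhds.sub
      (tendsto_inv_atTop_zero.comp (tendsto_atTop_add_const_left _ 1 tendsto_id))
  rw [sub_zero] at h
  refine h.congr' ?_
  filter_upwards [eventually_ge_atTop 0] with x hx
  rw [div_one_add_self_eq_one_sub_inv (by linarith)]

noncomputable def saturationIntegral (ν : Measure ℝ) (γ : ℝ) : ℝ :=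
  ∫ τ, τ * γ / (1 + τ * γ) ∂ν

section saturationIntegral

variable {ν : Measure ℝ}

@[simp]
lemma saturationIntegral_zero : saturationIntegral ν 0 = 0 := by
  simp [saturationIntegral]

lemma aestronglyMeasurable_saturationIntegrand (γ : ℝ) :
    AEStronglyMeasurable (fun τ : ℝ => τ * γ / (1 + τ * γ)) ν :=
  (by fun_prop : Measurable fun τ : ℝ => τ * γ / (1 + τ * γ)).aestronglyMeasurable

variable (hν : ∀ᵐ τ ∂ν, 0 ≤ τ)
include hν

lemma norm_saturationIntegrand_le_one {γ : ℝ} (hγ : 0 ≤ γ) :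
    ∀ᵐ τ ∂ν, ‖τ * γ / (1 + τ * γ)‖ ≤ 1 := by
  filter_upwards [hν] with τ hτ
  obtain ⟨h0, h1⟩ := div_one_add_self_mem_Ico (mul_nonneg hτ hγ)
  rw [Real.norm_of_nonneg h0]
  exact h1.le

variable [IsFiniteMeasure ν]

lemma integrable_saturationIntegrand {γ : ℝ} (hγ : 0 ≤ γ) :
    Integrable (fun τ => τ * γ / (1 + τ * γ)) ν :=
  (integrable_const 1).mono' (aestronglyMeasurable_saturationIntegrand γ)
    (norm_saturationIntegrand_le_one hν hγ)

lemma continuousOn_saturationIntegral : ContinuousOn (saturationIntegral ν) (Ici 0) := by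
  refine continuousOn_of_dominated (fun γ _ => aestronglyMeasurable_saturationIntegrand γ)
    (fun γ hγ => norm_saturationIntegrand_le_one hν hγ) (integrable_const 1) ?_
  filter_upwards [hν] with τ hτ
  exact continuousOn_div_one_add_self.comp (by fun_prop) fun _ hγ => mul_mem_Ioi_neg_one hτ hγ

lemma strictMonoOn_saturationIntegral (hpos : 0 < ν (Ioi 0)) :
    StrictMonoOn (saturationIntegral ν) (Ici 0) := by
  intro a ha b hb hab
  have hmono : ∀ τ, 0 ≤ τ → τ * a / (1 + τ * a) ≤ τ * b / (1 + τ * b) := fun τ hτ =>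
    strictMonoOn_div_one_add_self.monotoneOn (mul_mem_Ioi_neg_one hτ ha)
      (mul_mem_Ioi_neg_one hτ hb) (mul_le_mul_of_nonneg_left hab.le hτ)
  have hia := integrable_saturationIntegrand hν ha
  have hib := integrable_saturationIntegrand hν hb
  rw [saturationIntegral, saturationIntegral, ← sub_pos, ← integral_sub hib hia,
    integral_pos_iff_support_of_nonneg_ae]
  · refine hpos.trans_le (measure_mono fun τ (hτ : 0 < τ) => ?_)
    exact sub_ne_zero.2 (strictMonoOn_div_one_add_self (mul_mem_Ioi_neg_one hτ.le ha)
      (mul_mem_Ioi_neg_one hτ.le hb) (mul_lt_mul_of_pos_left hab hτ)).ne'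
  · filter_upwards [hν] with τ hτ
    exact sub_nonneg.2 (hmono τ hτ)
  · exact hib.sub hia

lemma tendsto_saturationIntegral_atTop :
    Tendsto (saturationIntegral ν) atTop (𝓝 (ν.real (Ioi 0))) := by
  rw [← integral_indicator_one measurableSet_Ioi]
  refine tendsto_integral_filter_of_dominated_convergence (fun _ => 1)
    (Eventually.of_forall aestronglyMeasurable_saturationIntegrand) ?_ (integrable_const 1) ?_
  · filter_upwards [eventually_ge_atTop 0] with γ hγ
    using norm_saturationIntegrand_le_one hν hγ
  · filter_upwards [hν] with τ hτ
    rcases hτ.lt_or_eq with hτ | rfl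
    · simp only [indicator_of_mem (mem_Ioi.2 hτ), Pi.one_apply]
      exact tendsto_div_one_add_self_atTop.comp (tendsto_id.const_mul_atTop hτ)
    · simp

end saturationIntegral

theorem unique_nonneg_fixed_point_general
    (μ : Measure ℝ) [IsFiniteMeasure μ]
    (c : ℝ) (hmass : 1 < c * (μ (Set.Ioi 0)).toReal) :
    ∃ γ : ℝ, 0 < γ ∧ (1 = γ * c * ∫ τ in Set.Ici 0, τ / (1 + τ * γ) ∂μ) ∧
      ∀ γ' : ℝ, 0 ≤ γ' → (1 = γ' * c * ∫ τ in Set.Ici 0, τ / (1 + τ * γ') ∂μ) → γ' = γ := by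
  set ν := μ.restrict (Ici 0)
  have hν : ∀ᵐ τ ∂ν, 0 ≤ τ := ae_restrict_mem measurableSet_Ici
  have hS : ∀ γ, γ * c * ∫ τ in Ici 0, τ / (1 + τ * γ) ∂μ = c * saturationIntegral ν γ := by
    intro γ
    rw [saturationIntegral, mul_comm γ, mul_assoc, ← integral_const_mul]
    congr 2 with τ
    ring
  have hmass' : 1 < c * ν.real (Ioi 0) := by
    rwa [measureReal_restrict_apply measurableSet_Ioi, inter_eq_left.2 Ioi_subset_Ici_self]
  have hc : 0 < c := pos_of_mul_pos_left (one_pos.trans hmass') measureReal_nonneg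
  have hpos : 0 < ν (Ioi 0) :=
    (ENNReal.toReal_pos_iff.1 (pos_of_mul_pos_right (one_pos.trans hmass') hc.le)).1
  obtain ⟨M, hM, hM0⟩ : ∃ M, 1 < c * saturationIntegral ν M ∧ 0 ≤ M :=
    (((tendsto_saturationIntegral_atTop hν).const_mul c).eventually
      (eventually_gt_nhds hmass') |>.and (eventually_ge_atTop 0)).exists
  obtain ⟨γ, ⟨hγ0, -⟩, hγ⟩ :=
    intermediate_value_Icc (f := fun γ => c * saturationIntegral ν γ) hM0
      (continuousOn_const.mul ((continuousOn_saturationIntegral hν).mono Icc_subset_Ici_self))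
      (by simpa using hM.le :
        (1 : ℝ) ∈ Icc (c * saturationIntegral ν 0) (c * saturationIntegral ν M))
  dsimp only at hγ
  refine ⟨γ, hγ0.lt_of_ne ?_, by rw [hS, hγ], fun γ' hγ' h' => ?_⟩
  · rintro rfl
    simp at hγ
  · rw [hS, ← hγ] at h'
    exact (strictMonoOn_saturationIntegral hν hpos).injOn hγ' hγ0
      (mul_left_cancel₀ hc.ne' h'.symm)

/-- Let `μ` be a finite Borel measure on `[0,∞)` and `c > 0` satisfy
`c · μ((0,∞)) > 1`. Then there exists a unique `γ ≥ 0` such that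
`1 = γ c ∫₀^∞ τ/(1+τγ) dμ(τ)`; moreover this `γ` is strictly positive. -/
theorem unique_nonneg_fixed_point
    (μ : Measure ℝ) [IsFiniteMeasure μ] (hsupp : μ (Set.Iio 0) = 0)
    (c : ℝ) (hc : 0 < c) (hmass : 1 < c * (μ (Set.Ioi 0)).toReal) :
    ∃ γ : ℝ, 0 < γ ∧ (1 = γ * c * ∫ τ in Set.Ici 0, τ / (1 + τ * γ) ∂μ) ∧
      ∀ γ' : ℝ, 0 ≤ γ' → (1 = γ' * c * ∫ τ in Set.Ici 0, τ / (1 + τ * γ') ∂μ) → γ' = γ :=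
  unique_nonneg_fixed_point_general μ c hmass
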